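/- arXiv:0807.3464 — 5 statements merged into one kernel-verified Lean document; each statement's English description precedes it below -/
import Mathlib

section
/- In the one-period return setup, assume additionally E[S] = (Δ−ε)ζ and E[Z] = λΔζ for some ζ ∈ ℝ. Then E[X | σ(τ₀)] = βετ₀ + Δμ + βΔζ − βεζ + Δλρζ almost surely. -/
open MeasureTheory ProbabilityTheory Real

lemma integrable_mul_pdf : Integrable (fun x : ℝ => x * gaussianPDFReal 0 1 x) := by
  have h : Integrable (fun x : ℝ => x * Real.exp (-(1/2 : ℝ) * x ^ 2)) :=
    integrable_mul_exp_neg_mul_sq (by norm_num)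
  have := (h.const_mul ((Real.sqrt (2 * π))⁻¹))
  refine this.congr ?_
  refine ae_of_all _ fun x => ?_
  simp only [gaussianPDFReal, NNReal.coe_one, mul_one, sub_zero]
  ring_nf

lemma integrable_id_gauss : Integrable id (gaussianReal 0 1) := by
  rw [gaussianReal_of_var_ne_zero 0 one_ne_zero]
  rw [integrable_withDensity_iff (measurable_gaussianPDF 0 1)
    (ae_of_all _ fun x => ENNReal.ofReal_lt_top)]
  refine integrable_mul_pdf.congr (ae_of_all _ fun x => ?_)
  simp [gaussianPDF, ENNReal.toReal_ofReal (gaussianPDFReal_nonneg 0 1 x)]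

lemma integral_id_gauss : ∫ x, x ∂(gaussianReal 0 1) = 0 := by
  have hmap : Measure.map (fun x : ℝ => -x) (gaussianReal 0 1) = gaussianReal 0 1 := by
    have h := gaussianReal_map_const_mul (μ := 0) (v := 1) (-1)
    simp only [neg_one_mul, mul_zero] at h
    convert h using 2
    norm_num
  have h1 : ∫ x, x ∂(gaussianReal 0 1) = ∫ x, -x ∂(gaussianReal 0 1) := by
    conv_lhs => rw [← hmap]
    exact integral_map measurable_neg.aemeasurable aestronglyMeasurable_id
  rw [integral_neg] at h1
  linarith

set_option maxHeartbeats 1000000 in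
theorem stmt3 {Ω : Type*} {mΩ : MeasurableSpace Ω} (P : Measure Ω) [IsProbabilityMeasure P]
    (μ β σ ρ Δ lam γ ε : ℝ) (hΔ : 0 < Δ) (hlam : 0 < lam)
    (hγ : γ = Real.exp (-(lam * Δ))) (hε : ε = (1 - γ) / lam)
    (τ₀ U S Z W : Ω → ℝ)
    (hτ : Measurable τ₀) (hU : Measurable U) (hS : Measurable S) (hZ : Measurable Z)
    (hW : Measurable W)
    (hτm : ∀ n : ℕ, Integrable (fun ω => |τ₀ ω| ^ n) P)
    (hUm : ∀ n : ℕ, Integrable (fun ω => |U ω| ^ n) P)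
    (hSm : ∀ n : ℕ, Integrable (fun ω => |S ω| ^ n) P)
    (hZm : ∀ n : ℕ, Integrable (fun ω => |Z ω| ^ n) P)
    (hindep : IndepFun (fun ω => (U ω, S ω, Z ω)) τ₀ P)
    (hWlaw : Measure.map W P = gaussianReal 0 1)
    (hWindep : IndepFun W (fun ω => (τ₀ ω, U ω, S ω, Z ω)) P)
    (Y X : Ω → ℝ)
    (hY : Y = fun ω => ε * τ₀ ω + S ω)
    (hYpos : ∀ᵐ ω ∂P, 0 ≤ Y ω)
    (hX : X = fun ω => μ * Δ + β * Y ω + σ * Real.sqrt (Y ω) * W ω + ρ * Z ω)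
    (ζ : ℝ)
    (hSmean : ∫ ω, S ω ∂P = (Δ - ε) * ζ)
    (hZmean : ∫ ω, Z ω ∂P = lam * Δ * ζ) :
    P[X | MeasurableSpace.comap τ₀ inferInstance] =ᵐ[P]
      fun ω => β * ε * τ₀ ω + Δ * μ + β * Δ * ζ - β * ε * ζ + Δ * lam * ρ * ζ := by
  have hm : MeasurableSpace.comap τ₀ inferInstance ≤ mΩ := measurable_iff_comap_le.1 hτ
  have hm₂ : MeasurableSpace.comap (fun ω => (τ₀ ω, S ω)) inferInstance ≤ mΩ :=
    measurable_iff_comap_le.1 (hτ.prodMk hS)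
  have hm₁₂ : MeasurableSpace.comap τ₀ inferInstance
      ≤ MeasurableSpace.comap (fun ω => (τ₀ ω, S ω)) inferInstance := by
    have h : MeasurableSpace.comap τ₀ (inferInstance : MeasurableSpace ℝ)
        = MeasurableSpace.comap (fun ω => (τ₀ ω, S ω))
          (MeasurableSpace.comap Prod.fst inferInstance) :=
      (MeasurableSpace.comap_comp (f := Prod.fst) (g := fun ω => (τ₀ ω, S ω))).symm
    rw [h]
    exact MeasurableSpace.comap_mono (measurable_iff_comap_le.1 measurable_fst)
  -- basic integrability
  have intτ : Integrable τ₀ P := by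
    refine (hτm 1).mono' hτ.aestronglyMeasurable (ae_of_all _ fun ω => ?_)
    simp [Real.norm_eq_abs]
  have intS : Integrable S P := by
    refine (hSm 1).mono' hS.aestronglyMeasurable (ae_of_all _ fun ω => ?_)
    simp [Real.norm_eq_abs]
  have intZ : Integrable Z P := by
    refine (hZm 1).mono' hZ.aestronglyMeasurable (ae_of_all _ fun ω => ?_)
    simp [Real.norm_eq_abs]
  have hYmeas : Measurable Y := by rw [hY]; exact (hτ.const_mul ε).add hS
  have intY : Integrable Y P := by
    rw [hY]; exact (intτ.const_mul ε).add intS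
  have intsqrt : Integrable (fun ω => Real.sqrt (Y ω)) P := by
    refine ((integrable_const (1:ℝ)).add intY.abs).mono'
      hYmeas.sqrt.aestronglyMeasurable (ae_of_all _ fun ω => ?_)
    simp only [Real.norm_eq_abs, Pi.add_apply, Pi.abs_apply]
    rw [abs_of_nonneg (Real.sqrt_nonneg _)]
    have h1 : Y ω ≤ (1 + |Y ω|) ^ 2 := by nlinarith [abs_nonneg (Y ω), le_abs_self (Y ω)]
    calc Real.sqrt (Y ω) ≤ Real.sqrt ((1 + |Y ω|) ^ 2) := Real.sqrt_le_sqrt h1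
      _ = 1 + |Y ω| := by
          rw [Real.sqrt_sq (by positivity)]
  have intW : Integrable W P := by
    have h : Integrable id (Measure.map W P) := by rw [hWlaw]; exact integrable_id_gauss
    exact (integrable_map_measure aestronglyMeasurable_id hW.aemeasurable).mp h
  have EW : ∫ ω, W ω ∂P = 0 := by
    have h := integral_map (μ := P) hW.aemeasurable (aestronglyMeasurable_id (α := ℝ))
    simp only [id] at h
    rw [← h, hWlaw, integral_id_gauss]
  -- independence of sqrt Y and W
  have indepSW : IndepFun (fun ω => Real.sqrt (Y ω)) W P := by
    have h := hWindep.comp measurable_id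
      (Real.continuous_sqrt.measurable.comp ((measurable_fst.const_mul ε).add
        (measurable_fst.comp (measurable_snd.comp measurable_snd))))
    rw [hY]
    exact h.symm
  have intSW : Integrable (fun ω => Real.sqrt (Y ω) * W ω) P :=
    indepSW.integrable_mul intsqrt intW
  -- conditional expectation of sqrt Y * W
  have hWpair : IndepFun W (fun ω => (τ₀ ω, S ω)) P :=
    hWindep.comp measurable_id
      (measurable_fst.prodMk (measurable_fst.comp (measurable_snd.comp measurable_snd)))
  have condW : P[W|MeasurableSpace.comap (fun ω => (τ₀ ω, S ω)) inferInstance]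
      =ᵐ[P] fun _ => ∫ ω, W ω ∂P :=
    condExp_indep_eq (measurable_iff_comap_le.1 hW) hm₂
      (measurable_iff_comap_le.2 le_rfl).stronglyMeasurable hWpair
  have sm_sqrt : StronglyMeasurable[MeasurableSpace.comap (fun ω => (τ₀ ω, S ω)) inferInstance]
      (fun ω => Real.sqrt (Y ω)) := by
    have hpair : Measurable[MeasurableSpace.comap (fun ω => (τ₀ ω, S ω)) inferInstance]
        (fun ω => (τ₀ ω, S ω)) := measurable_iff_comap_le.2 le_rfl
    have h : Measurable[MeasurableSpace.comap (fun ω => (τ₀ ω, S ω)) inferInstance]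
        (fun ω => Real.sqrt (ε * τ₀ ω + S ω)) :=
      (Real.continuous_sqrt.measurable.comp
        ((measurable_fst.const_mul ε).add measurable_snd)).comp hpair
    rw [hY]
    exact h.stronglyMeasurable
  have cond2 : P[(fun ω => Real.sqrt (Y ω)) * W|
      MeasurableSpace.comap (fun ω => (τ₀ ω, S ω)) inferInstance] =ᵐ[P]
      (fun ω => Real.sqrt (Y ω)) * P[W|MeasurableSpace.comap (fun ω => (τ₀ ω, S ω)) inferInstance] :=
    condExp_mul_of_stronglyMeasurable_left sm_sqrt intSW intW
  have cond2' : P[(fun ω => Real.sqrt (Y ω)) * W|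
      MeasurableSpace.comap (fun ω => (τ₀ ω, S ω)) inferInstance] =ᵐ[P] 0 := by
    refine cond2.trans ?_
    filter_upwards [condW] with ω hω
    simp [hω, EW]
  have condSW : P[(fun ω => Real.sqrt (Y ω)) * W|MeasurableSpace.comap τ₀ inferInstance]
      =ᵐ[P] 0 := by
    have h1 := condExp_condExp_of_le (μ := P)
      (f := (fun ω => Real.sqrt (Y ω)) * W) hm₁₂ hm₂
    refine h1.symm.trans ?_
    refine (condExp_congr_ae cond2').trans ?_
    rw [condExp_zero]
  -- conditional expectations of S and Z
  have indepS : IndepFun S τ₀ P := hindep.comp (measurable_fst.comp measurable_snd) measurable_id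
  have indepZ : IndepFun Z τ₀ P := hindep.comp (measurable_snd.comp measurable_snd) measurable_id
  have condS : P[S|MeasurableSpace.comap τ₀ inferInstance] =ᵐ[P] fun _ => (Δ - ε) * ζ := by
    rw [← hSmean]
    exact condExp_indep_eq (measurable_iff_comap_le.1 hS) hm
      (measurable_iff_comap_le.2 le_rfl).stronglyMeasurable indepS
  have condZ : P[Z|MeasurableSpace.comap τ₀ inferInstance] =ᵐ[P] fun _ => lam * Δ * ζ := by
    rw [← hZmean]
    exact condExp_indep_eq (measurable_iff_comap_le.1 hZ) hm
      (measurable_iff_comap_le.2 le_rfl).stronglyMeasurable indepZ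
  -- decompose X
  have hXeq : X = (fun _ : Ω => μ * Δ) + (β * ε) • τ₀ + β • S
      + σ • ((fun ω => Real.sqrt (Y ω)) * W) + ρ • Z := by
    funext ω
    simp only [hX, hY, Pi.add_apply, Pi.smul_apply, Pi.mul_apply, smul_eq_mul]
    ring
  have smτ : StronglyMeasurable[MeasurableSpace.comap τ₀ inferInstance] τ₀ :=
    (measurable_iff_comap_le.2 le_rfl).stronglyMeasurable
  have condτ : P[(β * ε) • τ₀|MeasurableSpace.comap τ₀ inferInstance] = (β * ε) • τ₀ :=
    condExp_of_stronglyMeasurable hm (smτ.const_smul _) (intτ.smul _)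
  have h0 : P[(fun _ : Ω => μ * Δ)|MeasurableSpace.comap τ₀ inferInstance]
      = fun _ => μ * Δ := condExp_const hm _
  -- combine
  rw [hXeq]
  have i1 : Integrable ((fun _ : Ω => μ * Δ) + (β * ε) • τ₀ + β • S
      + σ • ((fun ω => Real.sqrt (Y ω)) * W)) P :=
    (((integrable_const _).add (intτ.smul _)).add (intS.smul _)).add (intSW.smul _)
  have i2 : Integrable ((fun _ : Ω => μ * Δ) + (β * ε) • τ₀ + β • S) P :=
    ((integrable_const _).add (intτ.smul _)).add (intS.smul _)
  have i3 : Integrable ((fun _ : Ω => μ * Δ) + (β * ε) • τ₀) P :=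
    (integrable_const _).add (intτ.smul _)
  have e4 : P[ρ • Z|MeasurableSpace.comap τ₀ inferInstance] =ᵐ[P]
      fun _ => ρ * (lam * Δ * ζ) :=
    (condExp_smul ρ Z _).trans (condZ.mono fun ω h => by simp [h])
  have e3 : P[σ • ((fun ω => Real.sqrt (Y ω)) * W)|MeasurableSpace.comap τ₀ inferInstance]
      =ᵐ[P] fun _ => 0 :=
    (condExp_smul σ _ _).trans (condSW.mono fun ω h => by simp [h])
  have e2 : P[β • S|MeasurableSpace.comap τ₀ inferInstance] =ᵐ[P]
      fun _ => β * ((Δ - ε) * ζ) :=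
    (condExp_smul β S _).trans (condS.mono fun ω h => by simp [h])
  have a1 := condExp_add (m := MeasurableSpace.comap τ₀ inferInstance) i1 (intZ.smul ρ)
  have a2 : P[(fun _ : Ω => μ * Δ) + (β * ε) • τ₀ + β • S
        + σ • ((fun ω => Real.sqrt (Y ω)) * W)|MeasurableSpace.comap τ₀ inferInstance] =ᵐ[P]
      P[(fun _ : Ω => μ * Δ) + (β * ε) • τ₀ + β • S|MeasurableSpace.comap τ₀ inferInstance]
        + P[σ • ((fun ω => Real.sqrt (Y ω)) * W)|MeasurableSpace.comap τ₀ inferInstance] :=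
    condExp_add (m := MeasurableSpace.comap τ₀ inferInstance) i2 (intSW.smul σ)
  have a3 := condExp_add (m := MeasurableSpace.comap τ₀ inferInstance) i3 (intS.smul β)
  have a4 := condExp_add (m := MeasurableSpace.comap τ₀ inferInstance)
    (integrable_const (μ * Δ)) (intτ.smul (β * ε))
  filter_upwards [a1, a2, a3, a4, e2, e3, e4] with ω k1 k2 k3 k4 j2 j3 j4
  simp only [Pi.add_apply] at k1 k2 k3 k4 ⊢
  rw [k1, k2, k3, k4, j2, j3, j4, h0, condτ]
  simp only [Pi.smul_apply, smul_eq_mul]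
  ring
end

section
/- Let n ≥ 2 and let τ₀, τ₁, …, τₙ be real numbers. Define ξ¹ = (1/n)∑_{i=1}^n τᵢ, ξ² = (1/n)∑_{i=1}^n τᵢτ_{i−1}, ξ³ = (1/n)∑_{i=1}^n τᵢ², υ¹ = (1/n)∑_{i=1}^n τ_{i−1}, υ² = (1/n)∑_{i=1}^n τ_{i−1}². Assume υ² − (υ¹)² > 0, ξ² − ξ¹υ¹ > 0, and set γ̂ = (ξ² − ξ¹υ¹)/(υ² − (υ¹)²); assume γ̂ ≠ 1 and γ̂ ≠ −1, and set ζ̂ = (γ̂υ¹ − ξ¹)/(γ̂ − 1) and η̂ = (ξ³ − γ̂²υ² − 2γ̂(1−γ̂)ζ̂υ¹ − (1−γ̂)²ζ̂²)/(1 − γ̂²). Then (γ̂, ζ̂, η̂) satisfies the three estimating equations ∑_{k=1}^n [τ_k − (γ̂τ_{k−1} + (1−γ̂)ζ̂)] = 0, ∑_{k=1}^n [τ_kτ_{k−1} − (γ̂τ_{k−1}² + (1−γ̂)ζ̂τ_{k−1})] = 0, and ∑_{k=1}^n [τ_k² − (γ̂²τ_{k−1}² + 2γ̂(1−γ̂)ζ̂τ_{k−1}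 + (1−γ̂)²ζ̂² + (1−γ̂²)η̂)] = 0; moreover, any triple (γ, ζ, η) of real numbers with γ ≠ 1 and γ ≠ −1 satisfying these three equations equals (γ̂, ζ̂, η̂). -/
open Finset

theorem stmt7 (n : ℕ) (hn : 2 ≤ n) (τ : ℕ → ℝ)
    (ξ1 ξ2 ξ3 υ1 υ2 γh ζh ηh : ℝ)
    (hξ1 : ξ1 = (1 / (n : ℝ)) * ∑ i ∈ Finset.Icc 1 n, τ i)
    (hξ2 : ξ2 = (1 / (n : ℝ)) * ∑ i ∈ Finset.Icc 1 n, τ i * τ (i - 1))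
    (hξ3 : ξ3 = (1 / (n : ℝ)) * ∑ i ∈ Finset.Icc 1 n, τ i ^ 2)
    (hυ1 : υ1 = (1 / (n : ℝ)) * ∑ i ∈ Finset.Icc 1 n, τ (i - 1))
    (hυ2 : υ2 = (1 / (n : ℝ)) * ∑ i ∈ Finset.Icc 1 n, τ (i - 1) ^ 2)
    (hpos1 : υ2 - υ1 ^ 2 > 0) (hpos2 : ξ2 - ξ1 * υ1 > 0)
    (hγ : γh = (ξ2 - ξ1 * υ1) / (υ2 - υ1 ^ 2)) (hγ1 : γh ≠ 1) (hγm1 : γh ≠ -1)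
    (hζ : ζh = (γh * υ1 - ξ1) / (γh - 1))
    (hη : ηh = (ξ3 - γh ^ 2 * υ2 - 2 * γh * (1 - γh) * ζh * υ1
        - (1 - γh) ^ 2 * ζh ^ 2) / (1 - γh ^ 2)) :
    ((∑ k ∈ Finset.Icc 1 n, (τ k - (γh * τ (k - 1) + (1 - γh) * ζh)) = 0) ∧
     (∑ k ∈ Finset.Icc 1 n,
        (τ k * τ (k - 1) - (γh * τ (k - 1) ^ 2 + (1 - γh) * ζh * τ (k - 1))) = 0) ∧
     (∑ k ∈ Finset.Icc 1 n,
        (τ k ^ 2 - (γh ^ 2 * τ (k - 1) ^ 2 + 2 * γh * (1 - γh) * ζh * τ (k - 1)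
          + (1 - γh) ^ 2 * ζh ^ 2 + (1 - γh ^ 2) * ηh)) = 0)) ∧
    (∀ γ ζ η : ℝ, γ ≠ 1 → γ ≠ -1 →
      (∑ k ∈ Finset.Icc 1 n, (τ k - (γ * τ (k - 1) + (1 - γ) * ζ)) = 0) →
      (∑ k ∈ Finset.Icc 1 n,
        (τ k * τ (k - 1) - (γ * τ (k - 1) ^ 2 + (1 - γ) * ζ * τ (k - 1))) = 0) →
      (∑ k ∈ Finset.Icc 1 n,
        (τ k ^ 2 - (γ ^ 2 * τ (k - 1) ^ 2 + 2 * γ * (1 - γ) * ζ * τ (k - 1)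
          + (1 - γ) ^ 2 * ζ ^ 2 + (1 - γ ^ 2) * η)) = 0) →
      (γ, ζ, η) = (γh, ζh, ηh)) := by
  have hn0 : (n : ℝ) ≠ 0 := by positivity
  have hcard : ((Finset.Icc 1 n).card : ℝ) = (n : ℝ) := by
    rw [Nat.card_Icc]; push_cast; ring
  -- raw sums
  set A := ∑ i ∈ Finset.Icc 1 n, τ i with hA
  set B := ∑ i ∈ Finset.Icc 1 n, τ i * τ (i - 1) with hB
  set C := ∑ i ∈ Finset.Icc 1 n, τ i ^ 2 with hC
  set D := ∑ i ∈ Finset.Icc 1 n, τ (i - 1) with hD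
  set E := ∑ i ∈ Finset.Icc 1 n, τ (i - 1) ^ 2 with hE
  have hA' : A = (n : ℝ) * ξ1 := by rw [hξ1]; field_simp
  have hB' : B = (n : ℝ) * ξ2 := by rw [hξ2]; field_simp
  have hC' : C = (n : ℝ) * ξ3 := by rw [hξ3]; field_simp
  have hD' : D = (n : ℝ) * υ1 := by rw [hυ1]; field_simp
  have hE' : E = (n : ℝ) * υ2 := by rw [hυ2]; field_simp
  have key1 : ∀ γ ζ : ℝ,
      ∑ k ∈ Finset.Icc 1 n, (τ k - (γ * τ (k - 1) + (1 - γ) * ζ))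
        = (n : ℝ) * (ξ1 - (γ * υ1 + (1 - γ) * ζ)) := by
    intro γ ζ
    have : ∑ k ∈ Finset.Icc 1 n, (τ k - (γ * τ (k - 1) + (1 - γ) * ζ))
        = A - (γ * D + ((Finset.Icc 1 n).card : ℝ) * ((1 - γ) * ζ)) := by
      rw [Finset.sum_sub_distrib, Finset.sum_add_distrib, ← Finset.mul_sum,
        Finset.sum_const, nsmul_eq_mul]
    rw [this, hcard, hA', hD']; ring
  have key2 : ∀ γ ζ : ℝ,
      ∑ k ∈ Finset.Icc 1 n,
        (τ k * τ (k - 1) - (γ * τ (k - 1) ^ 2 + (1 - γ) * ζ * τ (k - 1)))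
        = (n : ℝ) * (ξ2 - (γ * υ2 + (1 - γ) * ζ * υ1)) := by
    intro γ ζ
    have : ∑ k ∈ Finset.Icc 1 n,
        (τ k * τ (k - 1) - (γ * τ (k - 1) ^ 2 + (1 - γ) * ζ * τ (k - 1)))
        = B - (γ * E + (1 - γ) * ζ * D) := by
      rw [Finset.sum_sub_distrib, Finset.sum_add_distrib, ← Finset.mul_sum,
        ← Finset.mul_sum]
    rw [this, hB', hD', hE']; ring
  have key3 : ∀ γ ζ η : ℝ,
      ∑ k ∈ Finset.Icc 1 n,
        (τ k ^ 2 - (γ ^ 2 * τ (k - 1) ^ 2 + 2 * γ * (1 - γ) * ζ * τ (k - 1)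
          + (1 - γ) ^ 2 * ζ ^ 2 + (1 - γ ^ 2) * η))
        = (n : ℝ) * (ξ3 - (γ ^ 2 * υ2 + 2 * γ * (1 - γ) * ζ * υ1
          + (1 - γ) ^ 2 * ζ ^ 2 + (1 - γ ^ 2) * η)) := by
    intro γ ζ η
    have : ∑ k ∈ Finset.Icc 1 n,
        (τ k ^ 2 - (γ ^ 2 * τ (k - 1) ^ 2 + 2 * γ * (1 - γ) * ζ * τ (k - 1)
          + (1 - γ) ^ 2 * ζ ^ 2 + (1 - γ ^ 2) * η))
        = C - γ ^ 2 * E - 2 * γ * (1 - γ) * ζ * D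
          - ((Finset.Icc 1 n).card : ℝ) * ((1 - γ) ^ 2 * ζ ^ 2 + (1 - γ ^ 2) * η) := by
      rw [show (∑ k ∈ Finset.Icc 1 n,
        (τ k ^ 2 - (γ ^ 2 * τ (k - 1) ^ 2 + 2 * γ * (1 - γ) * ζ * τ (k - 1)
          + (1 - γ) ^ 2 * ζ ^ 2 + (1 - γ ^ 2) * η)))
        = ∑ k ∈ Finset.Icc 1 n, (τ k ^ 2 - γ ^ 2 * τ (k - 1) ^ 2
          - 2 * γ * (1 - γ) * ζ * τ (k - 1)
          - ((1 - γ) ^ 2 * ζ ^ 2 + (1 - γ ^ 2) * η))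
        from Finset.sum_congr rfl (fun k _ => by ring)]
      rw [Finset.sum_sub_distrib, Finset.sum_sub_distrib, Finset.sum_sub_distrib,
        ← Finset.mul_sum, ← Finset.mul_sum, Finset.sum_const, nsmul_eq_mul]
    rw [this, hcard, hC', hD', hE']; ring
  have hden : υ2 - υ1 ^ 2 ≠ 0 := ne_of_gt hpos1
  have hγden : γh - 1 ≠ 0 := sub_ne_zero.mpr hγ1
  have hγsq : 1 - γh ^ 2 ≠ 0 := by
    have h1 : 1 - γh ≠ 0 := fun h => hγ1 (by linarith)
    have h2 : 1 + γh ≠ 0 := fun h => hγm1 (by linarith)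
    have : 1 - γh ^ 2 = (1 - γh) * (1 + γh) := by ring
    rw [this]; exact mul_ne_zero h1 h2
  have hγe : γh * (υ2 - υ1 ^ 2) = ξ2 - ξ1 * υ1 := by
    rw [hγ]; field_simp
  have hζe : ζh * (γh - 1) = γh * υ1 - ξ1 := by
    rw [hζ]; field_simp
  have hηe : ηh * (1 - γh ^ 2) = ξ3 - γh ^ 2 * υ2 - 2 * γh * (1 - γh) * ζh * υ1
      - (1 - γh) ^ 2 * ζh ^ 2 := by
    rw [hη]; field_simp
  constructor
  · refine ⟨?_, ?_, ?_⟩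
    · rw [key1]
      have : ξ1 - (γh * υ1 + (1 - γh) * ζh) = 0 := by linear_combination hζe
      rw [this, mul_zero]
    · rw [key2]
      have : ξ2 - (γh * υ2 + (1 - γh) * ζh * υ1) = 0 := by
        linear_combination -hγe + υ1 * hζe
      rw [this, mul_zero]
    · rw [key3]
      have : ξ3 - (γh ^ 2 * υ2 + 2 * γh * (1 - γh) * ζh * υ1
          + (1 - γh) ^ 2 * ζh ^ 2 + (1 - γh ^ 2) * ηh) = 0 := by linear_combination -hηe
      rw [this, mul_zero]
  · intro γ ζ η hg1 hgm1 e1 e2 e3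
    rw [key1] at e1; rw [key2] at e2; rw [key3] at e3
    have f1 : ξ1 - (γ * υ1 + (1 - γ) * ζ) = 0 := by
      rcases mul_eq_zero.mp e1 with h | h
      · exact absurd h hn0
      · exact h
    have f2 : ξ2 - (γ * υ2 + (1 - γ) * ζ * υ1) = 0 := by
      rcases mul_eq_zero.mp e2 with h | h
      · exact absurd h hn0
      · exact h
    have f3 : ξ3 - (γ ^ 2 * υ2 + 2 * γ * (1 - γ) * ζ * υ1
        + (1 - γ) ^ 2 * ζ ^ 2 + (1 - γ ^ 2) * η) = 0 := by
      rcases mul_eq_zero.mp e3 with h | h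
      · exact absurd h hn0
      · exact h
    -- derive γ = γh
    have hγeq : γ = γh := by
      have : γ * (υ2 - υ1 ^ 2) = ξ2 - ξ1 * υ1 := by linear_combination υ1 * f1 - f2
      have := this.trans hγe.symm
      exact mul_right_cancel₀ hden this
    subst hγeq
    have hζeq : ζ = ζh := by
      have h1 : ζ * (γ - 1) = γ * υ1 - ξ1 := by linear_combination f1
      have := h1.trans hζe.symm
      exact mul_right_cancel₀ hγden this
    subst hζeq
    have hηeq : η = ηh := by
      have h1 : η * (1 - γ ^ 2) = ξ3 - γ ^ 2 * υ2 - 2 * γ * (1 - γ) * ζ * υ1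
          - (1 - γ) ^ 2 * ζ ^ 2 := by linear_combination -f3
      have := h1.trans hηe.symm
      exact mul_right_cancel₀ hγsq this
    subst hηeq
    rfl
end

section
/- Let Δ > 0, λ > 0, ζ > 0, η > 0, μ, β, ρ ∈ ℝ, σ > 0, and set γ = e^{−λΔ}, ε = (1−γ)/λ. Define ξ⁴ = Δ(μ + (β + λρ)ζ), ξ⁷ = β²(2Δη − 2εη + Δ²λζ²)/λ + 2β(2Δηρ − 2εηρ + Δ²ζ(μ + λρζ)) + Δ(2ηλρ² + σ²ζ + Δ(μ + λρζ)²), υ¹ = ζ, υ² = ζ² + η, and set a = (4β(−Δ + ε)ηλρ + β²(−2Δη + ε(η(2 + ελ) + ελ((υ¹)² − υ²))) + λ(−2Δηλρ² − (ξ⁴)² + ξ⁷))/λ and b = Δζ + ε(−ζ + υ¹). Then b = Δζ > 0, a/b = σ², and √(a/b) = σ. -/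
theorem stmt13 (Δ lam ζ η μ β ρ σ γ ε : ℝ) (hΔ : 0 < Δ) (hlam : 0 < lam)
    (hζ : 0 < ζ) (hη : 0 < η) (hσ : 0 < σ)
    (hγ : γ = Real.exp (-(lam * Δ))) (hε : ε = (1 - γ) / lam)
    (ξ4 ξ7 υ1 υ2 a b : ℝ)
    (hξ4 : ξ4 = Δ * (μ + (β + lam * ρ) * ζ))
    (hξ7 : ξ7 = β ^ 2 * (2 * Δ * η - 2 * ε * η + Δ ^ 2 * lam * ζ ^ 2) / lam
        + 2 * β * (2 * Δ * η * ρ - 2 * ε * η * ρ + Δ ^ 2 * ζ * (μ + lam * ρ * ζ))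
        + Δ * (2 * η * lam * ρ ^ 2 + σ ^ 2 * ζ + Δ * (μ + lam * ρ * ζ) ^ 2))
    (hυ1 : υ1 = ζ) (hυ2 : υ2 = ζ ^ 2 + η)
    (ha : a = (4 * β * (-Δ + ε) * η * lam * ρ
        + β ^ 2 * (-(2 * Δ * η) + ε * (η * (2 + ε * lam) + ε * lam * (υ1 ^ 2 - υ2)))
        + lam * (-(2 * Δ * η * lam * ρ ^ 2) - ξ4 ^ 2 + ξ7)) / lam)
    (hb : b = Δ * ζ + ε * (-ζ + υ1)) :
    (b = Δ * ζ ∧ 0 < b) ∧ a / b = σ ^ 2 ∧ Real.sqrt (a / b) = σ := by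
  have hlam' : lam ≠ 0 := hlam.ne'
  have hbeq : b = Δ * ζ := by rw [hb, hυ1]; ring
  have hbpos : 0 < b := by rw [hbeq]; positivity
  have haeq : a = σ ^ 2 * (Δ * ζ) := by
    rw [ha, hξ7, hξ4, hυ1, hυ2]; field_simp; ring
  have hdiv : a / b = σ ^ 2 := by
    rw [haeq, hbeq]; field_simp
  refine ⟨⟨hbeq, hbpos⟩, hdiv, ?_⟩
  rw [hdiv, Real.sqrt_sq hσ.le]
end

section
/- Let Δ > 0, λ₀ > 0, ζ₀ > 0, η₀ > 0, μ₀, β₀, ρ₀ ∈ ℝ, σ₀ > 0, and set γ₀ = e^{−λ₀Δ}, ε₀ = (1−γ₀)/λ₀. Define the theoretical moments ξ¹ = ζ₀, ξ² = ζ₀² + γ₀η₀, ξ³ = ζ₀² + η₀, ξ⁴ = Δ(μ₀ + (β₀ + λ₀ρ₀)ζ₀), ξ⁵ = Δζ₀(μ₀ + λ₀ρ₀ζ₀) + β₀(ε₀η₀ + Δζ₀²), ξ⁶ = 2ε₀η₀λ₀ρ₀ + Δζ₀(μ₀ + λ₀ρ₀ζ₀) + β₀(ε₀η₀ + Δζ₀²),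 ξ⁷ = β₀²(2Δη₀ − 2ε₀η₀ + Δ²λ₀ζ₀²)/λ₀ + 2β₀(2Δη₀ρ₀ − 2ε₀η₀ρ₀ + Δ²ζ₀(μ₀ + λ₀ρ₀ζ₀)) + Δ(2η₀λ₀ρ₀² + σ₀²ζ₀ + Δ(μ₀ + λ₀ρ₀ζ₀)²), υ¹ = ζ₀, υ² = ζ₀² + η₀. Let (ξₙ¹, …, ξₙ⁷, υₙ¹, υₙ²) be real sequences with ξₙⁱ → ξⁱ for i = 1,…,7 and υₙʲ → υʲ for j = 1,2 as n → ∞. Then: (a) eventually ξₙ² − ξₙ¹υₙ¹ > 0 and υₙ² − (υₙ¹)² > 0; and (b) defining for such n the quantities γₙ = (ξₙ² − ξₙ¹υₙ¹)/(υₙ² − (υₙ¹)²), ζₙ = (γₙυₙ¹ − ξₙ¹)/(γₙ − 1), ηₙ = −((−1 + γₙ²)(υₙ¹)² − γₙ²υₙ² + ξₙ³)/(−1 + γₙ²), λₙ = −log(γₙ)/Δ, εₙ = (1 − γₙ)/λₙ, βₙ = (ξₙ⁵ − υₙ¹ξₙ⁴)/(εₙ(υₙ² − (υₙ¹)²)),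 ρₙ = (−βₙεₙ(−(υₙ¹)² + εₙλₙ(ηₙ + (υₙ¹)² − υₙ²) + υₙ²) − ξₙ¹ξₙ⁴ + ξₙ⁶)/(2εₙηₙλₙ), μₙ = (−Δλₙρₙζₙ − βₙ(Δζₙ + εₙ(−ζₙ + υₙ¹)) + ξₙ⁴)/Δ, and σₙ = √(aₙ/bₙ) with aₙ = (4βₙ(−Δ + εₙ)ηₙλₙρₙ + βₙ²(−2Δηₙ + εₙ(ηₙ(2 + εₙλₙ) + εₙλₙ((υₙ¹)² − υₙ²))) + λₙ(−2Δηₙλₙρₙ² − (ξₙ⁴)² + ξₙ⁷))/λₙ and bₙ = Δζₙ + εₙ(−ζₙ + υₙ¹), one has γₙ → γ₀, ζₙ → ζ₀, ηₙ → η₀, λₙ → λ₀, βₙ → β₀, ρₙ → ρ₀, μₙ → μ₀ and σₙ → σ₀ as n → ∞. -/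
open Filter

theorem stmt14 (Δ lam₀ ζ₀ η₀ μ₀ β₀ ρ₀ σ₀ γ₀ ε₀ : ℝ)
    (hΔ : 0 < Δ) (hlam₀ : 0 < lam₀) (hζ₀ : 0 < ζ₀) (hη₀ : 0 < η₀) (hσ₀ : 0 < σ₀)
    (hγ₀ : γ₀ = Real.exp (-(lam₀ * Δ))) (hε₀ : ε₀ = (1 - γ₀) / lam₀)
    (ξ1 ξ2 ξ3 ξ4 ξ5 ξ6 ξ7 υ1 υ2 : ℕ → ℝ)
    (h1 : Tendsto ξ1 atTop (nhds ζ₀))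
    (h2 : Tendsto ξ2 atTop (nhds (ζ₀ ^ 2 + γ₀ * η₀)))
    (h3 : Tendsto ξ3 atTop (nhds (ζ₀ ^ 2 + η₀)))
    (h4 : Tendsto ξ4 atTop (nhds (Δ * (μ₀ + (β₀ + lam₀ * ρ₀) * ζ₀))))
    (h5 : Tendsto ξ5 atTop
      (nhds (Δ * ζ₀ * (μ₀ + lam₀ * ρ₀ * ζ₀) + β₀ * (ε₀ * η₀ + Δ * ζ₀ ^ 2))))
    (h6 : Tendsto ξ6 atTop
      (nhds (2 * ε₀ * η₀ * lam₀ * ρ₀ + Δ * ζ₀ * (μ₀ + lam₀ * ρ₀ * ζ₀)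
        + β₀ * (ε₀ * η₀ + Δ * ζ₀ ^ 2))))
    (h7 : Tendsto ξ7 atTop
      (nhds (β₀ ^ 2 * (2 * Δ * η₀ - 2 * ε₀ * η₀ + Δ ^ 2 * lam₀ * ζ₀ ^ 2) / lam₀
        + 2 * β₀ * (2 * Δ * η₀ * ρ₀ - 2 * ε₀ * η₀ * ρ₀ + Δ ^ 2 * ζ₀ * (μ₀ + lam₀ * ρ₀ * ζ₀))
        + Δ * (2 * η₀ * lam₀ * ρ₀ ^ 2 + σ₀ ^ 2 * ζ₀ + Δ * (μ₀ + lam₀ * ρ₀ * ζ₀) ^ 2))))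
    (hu1 : Tendsto υ1 atTop (nhds ζ₀))
    (hu2 : Tendsto υ2 atTop (nhds (ζ₀ ^ 2 + η₀)))
    (γs ζs ηs lams εs βs ρs μs σs as bs : ℕ → ℝ)
    (hγs : ∀ n, γs n = (ξ2 n - ξ1 n * υ1 n) / (υ2 n - (υ1 n) ^ 2))
    (hζs : ∀ n, ζs n = (γs n * υ1 n - ξ1 n) / (γs n - 1))
    (hηs : ∀ n, ηs n = -(((-1 + (γs n) ^ 2) * (υ1 n) ^ 2 - (γs n) ^ 2 * υ2 n + ξ3 n)
        / (-1 + (γs n) ^ 2)))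
    (hlams : ∀ n, lams n = -Real.log (γs n) / Δ)
    (hεs : ∀ n, εs n = (1 - γs n) / lams n)
    (hβs : ∀ n, βs n = (ξ5 n - υ1 n * ξ4 n) / (εs n * (υ2 n - (υ1 n) ^ 2)))
    (hρs : ∀ n, ρs n = (-(βs n * εs n * (-(υ1 n) ^ 2
          + εs n * lams n * (ηs n + (υ1 n) ^ 2 - υ2 n) + υ2 n))
        - ξ1 n * ξ4 n + ξ6 n) / (2 * εs n * ηs n * lams n))
    (hμs : ∀ n, μs n = (-(Δ * lams n * ρs n * ζs n)
        - βs n * (Δ * ζs n + εs n * (-ζs n + υ1 n)) + ξ4 n) / Δ)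
    (has : ∀ n, as n = (4 * βs n * (-Δ + εs n) * ηs n * lams n * ρs n
        + (βs n) ^ 2 * (-(2 * Δ * ηs n)
          + εs n * (ηs n * (2 + εs n * lams n) + εs n * lams n * ((υ1 n) ^ 2 - υ2 n)))
        + lams n * (-(2 * Δ * ηs n * lams n * (ρs n) ^ 2) - (ξ4 n) ^ 2 + ξ7 n)) / lams n)
    (hbs : ∀ n, bs n = Δ * ζs n + εs n * (-ζs n + υ1 n))
    (hσs : ∀ n, σs n = Real.sqrt (as n / bs n)) :
    (∀ᶠ n in atTop, ξ2 n - ξ1 n * υ1 n > 0 ∧ υ2 n - (υ1 n) ^ 2 > 0) ∧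
    Tendsto γs atTop (nhds γ₀) ∧ Tendsto ζs atTop (nhds ζ₀) ∧
    Tendsto ηs atTop (nhds η₀) ∧ Tendsto lams atTop (nhds lam₀) ∧
    Tendsto βs atTop (nhds β₀) ∧ Tendsto ρs atTop (nhds ρ₀) ∧
    Tendsto μs atTop (nhds μ₀) ∧ Tendsto σs atTop (nhds σ₀) := by

  -- basic facts
  have hγpos : 0 < γ₀ := hγ₀ ▸ Real.exp_pos _
  have hγlt1 : γ₀ < 1 := by
    rw [hγ₀]
    exact Real.exp_lt_one_iff.mpr (by nlinarith)
  have hlamne : lam₀ ≠ 0 := ne_of_gt hlam₀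
  have hεpos : 0 < ε₀ := by
    rw [hε₀]; exact div_pos (by linarith) hlam₀
  have hεne : ε₀ ≠ 0 := ne_of_gt hεpos
  have hγ1ne : γ₀ - 1 ≠ 0 := by intro h; nlinarith
  have hγ2ne : -1 + γ₀ ^ 2 ≠ 0 := by nlinarith
  have hηne : η₀ ≠ 0 := ne_of_gt hη₀
  have hΔne : Δ ≠ 0 := ne_of_gt hΔ
  -- denominator convergence
  have hden : Tendsto (fun n => υ2 n - (υ1 n) ^ 2) atTop (nhds (ζ₀ ^ 2 + η₀ - ζ₀ ^ 2)) :=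
    hu2.sub (hu1.pow 2)
  have hnum : Tendsto (fun n => ξ2 n - ξ1 n * υ1 n) atTop
      (nhds (ζ₀ ^ 2 + γ₀ * η₀ - ζ₀ * ζ₀)) := h2.sub (h1.mul hu1)
  -- eventually positive
  have hev : ∀ᶠ n in atTop, ξ2 n - ξ1 n * υ1 n > 0 ∧ υ2 n - (υ1 n) ^ 2 > 0 := by
    have e1 : ∀ᶠ n in atTop, ξ2 n - ξ1 n * υ1 n > 0 :=
      hnum.eventually (eventually_gt_nhds (by nlinarith))
    have e2 : ∀ᶠ n in atTop, υ2 n - (υ1 n) ^ 2 > 0 :=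
      hden.eventually (eventually_gt_nhds (by nlinarith))
    exact e1.and e2
  -- γ
  have hγ : Tendsto γs atTop (nhds γ₀) := by
    have key := hnum.div hden (by intro h; apply hηne; nlinarith)
    have heq : (ζ₀ ^ 2 + γ₀ * η₀ - ζ₀ * ζ₀) / (ζ₀ ^ 2 + η₀ - ζ₀ ^ 2) = γ₀ := by
      field_simp; ring_nf; exact mul_inv_cancel_right₀ hηne _
    rw [heq] at key
    exact key.congr (fun n => (hγs n).symm)
  -- ζ
  have hζ : Tendsto ζs atTop (nhds ζ₀) := by
    have key := ((hγ.mul hu1).sub h1).div (hγ.sub tendsto_const_nhds) hγ1ne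
    have heq : (γ₀ * ζ₀ - ζ₀) / (γ₀ - 1) = ζ₀ := by
      field_simp
    rw [heq] at key
    exact key.congr (fun n => (hζs n).symm)
  -- η
  have hη : Tendsto ηs atTop (nhds η₀) := by
    have key : Tendsto (fun n => ((-1 + (γs n) ^ 2) * (υ1 n) ^ 2 - (γs n) ^ 2 * υ2 n + ξ3 n)
        / (-1 + (γs n) ^ 2)) atTop
        (nhds (((-1 + γ₀ ^ 2) * ζ₀ ^ 2 - γ₀ ^ 2 * (ζ₀ ^ 2 + η₀) + (ζ₀ ^ 2 + η₀))
        / (-1 + γ₀ ^ 2))) :=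
      ((((tendsto_const_nhds.add (hγ.pow 2)).mul (hu1.pow 2)).sub
        ((hγ.pow 2).mul hu2)).add h3).div (tendsto_const_nhds.add (hγ.pow 2)) hγ2ne
    have key2 := key.neg
    have heq : -(((-1 + γ₀ ^ 2) * ζ₀ ^ 2 - γ₀ ^ 2 * (ζ₀ ^ 2 + η₀) + (ζ₀ ^ 2 + η₀))
        / (-1 + γ₀ ^ 2)) = η₀ := by
      field_simp; ring
    rw [heq] at key2
    exact key2.congr (fun n => (hηs n).symm)
  -- λ
  have hlam : Tendsto lams atTop (nhds lam₀) := by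
    have key := ((hγ.log (ne_of_gt hγpos)).neg).div_const Δ
    have heq : -Real.log γ₀ / Δ = lam₀ := by
      rw [hγ₀, Real.log_exp]; field_simp
    rw [heq] at key
    exact key.congr (fun n => (hlams n).symm)
  -- ε
  have hε : Tendsto εs atTop (nhds ε₀) := by
    have key : Tendsto (fun n => (1 - γs n) / lams n) atTop (nhds ((1 - γ₀) / lam₀)) :=
      (tendsto_const_nhds.sub hγ).div hlam hlamne
    rw [← hε₀] at key
    exact key.congr (fun n => (hεs n).symm)
  -- β
  have hβ : Tendsto βs atTop (nhds β₀) := by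
    have key := (h5.sub (hu1.mul h4)).div (hε.mul hden)
      (by intro h; apply hεne; have : ζ₀ ^ 2 + η₀ - ζ₀ ^ 2 = η₀ := by ring
          rw [this] at h; rcases mul_eq_zero.mp h with h' | h'
          · exact h'
          · exact absurd h' hηne)
    have heq : (Δ * ζ₀ * (μ₀ + lam₀ * ρ₀ * ζ₀) + β₀ * (ε₀ * η₀ + Δ * ζ₀ ^ 2)
        - ζ₀ * (Δ * (μ₀ + (β₀ + lam₀ * ρ₀) * ζ₀))) / (ε₀ * (ζ₀ ^ 2 + η₀ - ζ₀ ^ 2)) = β₀ := by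
      field_simp; ring_nf; exact mul_inv_cancel_right₀ hηne _
    rw [heq] at key
    exact key.congr (fun n => (hβs n).symm)
  -- ρ
  have hρ : Tendsto ρs atTop (nhds ρ₀) := by
    have key : Tendsto (fun n => (-(βs n * εs n * (-(υ1 n) ^ 2
          + εs n * lams n * (ηs n + (υ1 n) ^ 2 - υ2 n) + υ2 n))
        - ξ1 n * ξ4 n + ξ6 n) / (2 * εs n * ηs n * lams n)) atTop
        (nhds ((-(β₀ * ε₀ * (-ζ₀ ^ 2 + ε₀ * lam₀ * (η₀ + ζ₀ ^ 2 - (ζ₀ ^ 2 + η₀))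
          + (ζ₀ ^ 2 + η₀))) - ζ₀ * (Δ * (μ₀ + (β₀ + lam₀ * ρ₀) * ζ₀))
        + (2 * ε₀ * η₀ * lam₀ * ρ₀ + Δ * ζ₀ * (μ₀ + lam₀ * ρ₀ * ζ₀)
          + β₀ * (ε₀ * η₀ + Δ * ζ₀ ^ 2))) / (2 * ε₀ * η₀ * lam₀))) :=
      ((((hβ.mul hε).mul (((hu1.pow 2).neg.add
        ((hε.mul hlam).mul ((hη.add (hu1.pow 2)).sub hu2))).add hu2)).neg.sub
        (h1.mul h4)).add h6).div
        (((tendsto_const_nhds.mul hε).mul hη).mul hlam)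
        (by simp only [ne_eq]; positivity)
    have heq : (-(β₀ * ε₀ * (-ζ₀ ^ 2 + ε₀ * lam₀ * (η₀ + ζ₀ ^ 2 - (ζ₀ ^ 2 + η₀))
        + (ζ₀ ^ 2 + η₀))) - ζ₀ * (Δ * (μ₀ + (β₀ + lam₀ * ρ₀) * ζ₀))
        + (2 * ε₀ * η₀ * lam₀ * ρ₀ + Δ * ζ₀ * (μ₀ + lam₀ * ρ₀ * ζ₀)
        + β₀ * (ε₀ * η₀ + Δ * ζ₀ ^ 2))) / (2 * ε₀ * η₀ * lam₀) = ρ₀ := by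
      field_simp; ring
    rw [heq] at key
    exact key.congr (fun n => (hρs n).symm)
  -- μ
  have hμ : Tendsto μs atTop (nhds μ₀) := by
    have key : Tendsto (fun n => (-(Δ * lams n * ρs n * ζs n)
        - βs n * (Δ * ζs n + εs n * (-ζs n + υ1 n)) + ξ4 n) / Δ) atTop
        (nhds ((-(Δ * lam₀ * ρ₀ * ζ₀) - β₀ * (Δ * ζ₀ + ε₀ * (-ζ₀ + ζ₀))
        + Δ * (μ₀ + (β₀ + lam₀ * ρ₀) * ζ₀)) / Δ)) :=
      (((((tendsto_const_nhds.mul hlam).mul hρ).mul hζ).neg.sub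
        (hβ.mul ((tendsto_const_nhds.mul hζ).add (hε.mul (hζ.neg.add hu1))))).add h4).div_const Δ
    have heq : (-(Δ * lam₀ * ρ₀ * ζ₀) - β₀ * (Δ * ζ₀ + ε₀ * (-ζ₀ + ζ₀))
        + Δ * (μ₀ + (β₀ + lam₀ * ρ₀) * ζ₀)) / Δ = μ₀ := by
      field_simp; ring
    rw [heq] at key
    exact key.congr (fun n => (hμs n).symm)
  -- a and b
  have ha : Tendsto as atTop (nhds (Δ * σ₀ ^ 2 * ζ₀)) := by
    have key : Tendsto (fun n => (4 * βs n * (-Δ + εs n) * ηs n * lams n * ρs n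
        + (βs n) ^ 2 * (-(2 * Δ * ηs n)
          + εs n * (ηs n * (2 + εs n * lams n) + εs n * lams n * ((υ1 n) ^ 2 - υ2 n)))
        + lams n * (-(2 * Δ * ηs n * lams n * (ρs n) ^ 2) - (ξ4 n) ^ 2 + ξ7 n)) / lams n)
        atTop (nhds ((4 * β₀ * (-Δ + ε₀) * η₀ * lam₀ * ρ₀
        + β₀ ^ 2 * (-(2 * Δ * η₀) + ε₀ * (η₀ * (2 + ε₀ * lam₀)
          + ε₀ * lam₀ * (ζ₀ ^ 2 - (ζ₀ ^ 2 + η₀))))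
        + lam₀ * (-(2 * Δ * η₀ * lam₀ * ρ₀ ^ 2)
          - (Δ * (μ₀ + (β₀ + lam₀ * ρ₀) * ζ₀)) ^ 2
          + (β₀ ^ 2 * (2 * Δ * η₀ - 2 * ε₀ * η₀ + Δ ^ 2 * lam₀ * ζ₀ ^ 2) / lam₀
          + 2 * β₀ * (2 * Δ * η₀ * ρ₀ - 2 * ε₀ * η₀ * ρ₀ + Δ ^ 2 * ζ₀ * (μ₀ + lam₀ * ρ₀ * ζ₀))
          + Δ * (2 * η₀ * lam₀ * ρ₀ ^ 2 + σ₀ ^ 2 * ζ₀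
            + Δ * (μ₀ + lam₀ * ρ₀ * ζ₀) ^ 2)))) / lam₀)) := by
      have t1 : Tendsto (fun n => 4 * βs n * (-Δ + εs n) * ηs n * lams n * ρs n) atTop
          (nhds (4 * β₀ * (-Δ + ε₀) * η₀ * lam₀ * ρ₀)) :=
        ((((tendsto_const_nhds.mul hβ).mul (tendsto_const_nhds.add hε)).mul hη).mul hlam).mul hρ
      have t2 : Tendsto (fun n => (βs n) ^ 2 * (-(2 * Δ * ηs n)
          + εs n * (ηs n * (2 + εs n * lams n) + εs n * lams n * ((υ1 n) ^ 2 - υ2 n)))) atTop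
          (nhds (β₀ ^ 2 * (-(2 * Δ * η₀) + ε₀ * (η₀ * (2 + ε₀ * lam₀)
            + ε₀ * lam₀ * (ζ₀ ^ 2 - (ζ₀ ^ 2 + η₀)))))) :=
        (hβ.pow 2).mul ((tendsto_const_nhds.mul hη).neg.add
          (hε.mul ((hη.mul (tendsto_const_nhds.add (hε.mul hlam))).add
            ((hε.mul hlam).mul ((hu1.pow 2).sub hu2)))))
      have t3 : Tendsto (fun n => lams n * (-(2 * Δ * ηs n * lams n * (ρs n) ^ 2)
          - (ξ4 n) ^ 2 + ξ7 n)) atTop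
          (nhds (lam₀ * (-(2 * Δ * η₀ * lam₀ * ρ₀ ^ 2)
          - (Δ * (μ₀ + (β₀ + lam₀ * ρ₀) * ζ₀)) ^ 2
          + (β₀ ^ 2 * (2 * Δ * η₀ - 2 * ε₀ * η₀ + Δ ^ 2 * lam₀ * ζ₀ ^ 2) / lam₀
          + 2 * β₀ * (2 * Δ * η₀ * ρ₀ - 2 * ε₀ * η₀ * ρ₀ + Δ ^ 2 * ζ₀ * (μ₀ + lam₀ * ρ₀ * ζ₀))
          + Δ * (2 * η₀ * lam₀ * ρ₀ ^ 2 + σ₀ ^ 2 * ζ₀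
            + Δ * (μ₀ + lam₀ * ρ₀ * ζ₀) ^ 2))))) :=
        hlam.mul (((((tendsto_const_nhds.mul hη).mul hlam).mul (hρ.pow 2)).neg.sub
          (h4.pow 2)).add h7)
      exact ((t1.add t2).add t3).div hlam hlamne
    have heq : (4 * β₀ * (-Δ + ε₀) * η₀ * lam₀ * ρ₀
        + β₀ ^ 2 * (-(2 * Δ * η₀) + ε₀ * (η₀ * (2 + ε₀ * lam₀)
          + ε₀ * lam₀ * (ζ₀ ^ 2 - (ζ₀ ^ 2 + η₀))))
        + lam₀ * (-(2 * Δ * η₀ * lam₀ * ρ₀ ^ 2)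
          - (Δ * (μ₀ + (β₀ + lam₀ * ρ₀) * ζ₀)) ^ 2
          + (β₀ ^ 2 * (2 * Δ * η₀ - 2 * ε₀ * η₀ + Δ ^ 2 * lam₀ * ζ₀ ^ 2) / lam₀
          + 2 * β₀ * (2 * Δ * η₀ * ρ₀ - 2 * ε₀ * η₀ * ρ₀ + Δ ^ 2 * ζ₀ * (μ₀ + lam₀ * ρ₀ * ζ₀))
          + Δ * (2 * η₀ * lam₀ * ρ₀ ^ 2 + σ₀ ^ 2 * ζ₀
            + Δ * (μ₀ + lam₀ * ρ₀ * ζ₀) ^ 2)))) / lam₀ = Δ * σ₀ ^ 2 * ζ₀ := by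
      field_simp; ring
    rw [heq] at key
    exact key.congr (fun n => (has n).symm)
  have hb : Tendsto bs atTop (nhds (Δ * ζ₀)) := by
    have key : Tendsto (fun n => Δ * ζs n + εs n * (-ζs n + υ1 n)) atTop
        (nhds (Δ * ζ₀ + ε₀ * (-ζ₀ + ζ₀))) :=
      (tendsto_const_nhds.mul hζ).add (hε.mul (hζ.neg.add hu1))
    have heq : Δ * ζ₀ + ε₀ * (-ζ₀ + ζ₀) = Δ * ζ₀ := by ring
    rw [heq] at key
    exact key.congr (fun n => (hbs n).symm)
  -- σ
  have hσ : Tendsto σs atTop (nhds σ₀) := by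
    have hbne : Δ * ζ₀ ≠ 0 := by positivity
    have key := (ha.div hb hbne).sqrt
    have heq : Real.sqrt (Δ * σ₀ ^ 2 * ζ₀ / (Δ * ζ₀)) = σ₀ := by
      have : Δ * σ₀ ^ 2 * ζ₀ / (Δ * ζ₀) = σ₀ ^ 2 := by field_simp
      rw [this, Real.sqrt_sq hσ₀.le]
    rw [heq] at key
    exact key.congr (fun n => (hσs n).symm)
  exact ⟨hev, hγ, hζ, hη, hlam, hβ, hρ, hμ, hσ⟩
end

section
/- Let λ > 0, Δ > 0 and α, ν, a, b ∈ ℝ. For t ≥ 0 set ε_λ(t) = (1 − e^{−λt})/λ. Assume α − a·ε_λ(u) − b > 0 for all u ∈ [0, Δ], and αλ − a − λb ≠ 0. Then λ·∫₀^Δ ν(a·ε_λ(Δ−s) + b)/(α − a·ε_λ(Δ−s) − b) ds = νλ·(Δ(a + λb) + α·log((α − a·ε_λ(Δ) − b)/(α − b)))/(αλ − a − λb). -/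
set_option maxHeartbeats 1000000


theorem stmt18 (lam Δ α ν a b : ℝ) (hlam : 0 < lam) (hΔ : 0 < Δ)
    (ε : ℝ → ℝ) (hε : ∀ t, ε t = (1 - Real.exp (-(lam * t))) / lam)
    (hpos : ∀ u ∈ Set.Icc (0 : ℝ) Δ, α - a * ε u - b > 0)
    (hden : α * lam - a - lam * b ≠ 0) :
    lam * ∫ s in (0 : ℝ)..Δ, ν * (a * ε (Δ - s) + b) / (α - a * ε (Δ - s) - b)
      = ν * lam * (Δ * (a + lam * b)
          + α * Real.log ((α - a * ε Δ - b) / (α - b)))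
        / (α * lam - a - lam * b) := by
  have hl : lam ≠ 0 := hlam.ne'
  obtain ⟨c, hc⟩ : ∃ c : ℝ, c = α - b - a / lam := ⟨_, rfl⟩
  have hlc : lam * c = α * lam - a - lam * b := by rw [hc]; field_simp; ring
  have hcne : c ≠ 0 := by
    intro h; apply hden; rw [← hlc, h, mul_zero]
  set g : ℝ → ℝ := fun u => ν * (a * ε u + b) / (α - a * ε u - b) with hg
  have hcomp : (∫ s in (0 : ℝ)..Δ, ν * (a * ε (Δ - s) + b) / (α - a * ε (Δ - s) - b))
      = ∫ u in (0 : ℝ)..Δ, g u := by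
    have := intervalIntegral.integral_comp_sub_left (a := (0:ℝ)) (b := Δ) g Δ
    simpa [hg] using this
  have hfpos : ∀ u ∈ Set.Icc (0 : ℝ) Δ, 0 < α - a * ε u - b := hpos
  set F : ℝ → ℝ := fun u => ν * α / c * u + ν * α / (lam * c) * Real.log (α - a * ε u - b) - ν * u with hF
  have hderiv : ∀ u ∈ Set.Icc (0 : ℝ) Δ, HasDerivAt F (g u) u := by
    intro u hu
    have hfu : α - a * ε u - b ≠ 0 := (hfpos u hu).ne'
    have hεd : HasDerivAt ε (Real.exp (-(lam * u))) u := by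
      have h1 : HasDerivAt (fun t : ℝ => (1 - Real.exp (-(lam * t))) / lam)
          ((Real.exp (-(lam * u)) * lam) / lam) u := by
        have : HasDerivAt (fun t : ℝ => -(lam * t)) (-lam) u := by
          simpa [Pi.neg_def] using ((hasDerivAt_id u).const_mul lam).neg
        have := (this.exp)
        have h2 : HasDerivAt (fun t : ℝ => 1 - Real.exp (-(lam * t)))
            (Real.exp (-(lam * u)) * lam) u := by
          simpa [Pi.sub_def] using ((hasDerivAt_const u (1:ℝ)).sub this)
        simpa using h2.div_const lam
      have heq : (fun t : ℝ => (1 - Real.exp (-(lam * t))) / lam) = ε := by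
        funext t; rw [hε]
      rw [heq] at h1
      simpa [hl] using h1
    have hfd : HasDerivAt (fun u => α - a * ε u - b) (-(a * Real.exp (-(lam * u)))) u := by
      simpa [Pi.sub_def] using (((hasDerivAt_const u α).sub (hεd.const_mul a)).sub (hasDerivAt_const u b))
    have hlog : HasDerivAt (fun u => Real.log (α - a * ε u - b))
        (-(a * Real.exp (-(lam * u))) / (α - a * ε u - b)) u := hfd.log hfu
    have hFd : HasDerivAt F
        (ν * α / c + ν * α / (lam * c) * (-(a * Real.exp (-(lam * u))) / (α - a * ε u - b)) - ν) u := by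
      have := (((hasDerivAt_id u).const_mul (ν * α / c)).add (hlog.const_mul (ν * α / (lam * c)))).sub
        ((hasDerivAt_id u).const_mul ν)
      simpa [hF, mul_comm, Pi.add_def, Pi.sub_def] using this
    convert hFd using 1
    have key : a * Real.exp (-(lam * u)) = lam * ((α - a * ε u - b) - c) := by
      rw [hε, hc]; field_simp; ring
    rw [hg]
    field_simp [key]
    linear_combination (ν * α) * key
  have hcont : IntervalIntegrable g MeasureTheory.volume 0 Δ := by
    apply ContinuousOn.intervalIntegrable
    rw [Set.uIcc_of_le hΔ.le]
    have hεcont : Continuous ε := by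
      have : Continuous fun t : ℝ => (1 - Real.exp (-(lam * t))) / lam := by
        continuity
      convert this using 1; funext t; rw [hε]
    apply ContinuousOn.div
    · exact (continuous_const.mul ((continuous_const.mul hεcont).add continuous_const)).continuousOn
    · exact ((continuous_const.sub (continuous_const.mul hεcont)).sub continuous_const).continuousOn
    · intro u hu; exact (hfpos u hu).ne'
  have hint : (∫ u in (0 : ℝ)..Δ, g u) = F Δ - F 0 := by
    apply intervalIntegral.integral_eq_sub_of_hasDerivAt
    · intro u hu; exact hderiv u (by rwa [Set.uIcc_of_le hΔ.le] at hu)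
    · exact hcont
  rw [hcomp, hint]
  have hε0 : ε 0 = 0 := by rw [hε]; simp
  have hf0 : (0:ℝ) < α - b := by
    have := hfpos 0 ⟨le_refl _, hΔ.le⟩; rwa [hε0, mul_zero, sub_zero] at this
  have hfΔ : (0:ℝ) < α - a * ε Δ - b := hfpos Δ ⟨hΔ.le, le_refl _⟩
  rw [hF]
  simp only [hε0, mul_zero, sub_zero, mul_one]
  rw [Real.log_div hfΔ.ne' hf0.ne']
  rw [← hlc]
  have hα : α - a * ε 0 - b = α - b := by rw [hε0]; ring
  field_simp
  linear_combination (-(ν * Δ)) * hlc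
end
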